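/- Let D be a regular 4^m 2^{n-p} design with 2^k runs of resolution at least III, represented by direct-summing two-dimensional subspaces U_1, …, U_m of V = (ZMod 2)^k and two-level vectors w_1, …, w_n ∈ V. Suppose there is a defining word (s, u) ∈ K with s_j = 1 for some index j. Then A_{ℓ,t}(D_(j)) ≤ A_{ℓ,t}(D) for every length ℓ ≥ 3 and every type t, with strict inequality for at least one pair (ℓ, t); consequently the word length pattern of type m of the delete-one-factor projection D_(j) is lexicographically strictly smaller than that of D, i.e., D_(j) has strictly less aberration of type m than D. -/

import Mathlib

/-!
Inserting a zero at coordinate `j` embeds the defining words of `D_(j)` into those of `D`,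
preserving length and type. The image consists of the words with `s j = 0`, so it misses the
given word with `s j = 1`: every `A_{ℓ,t}` weakly decreases and the one at that word's
(length, type) strictly decreases. Since types never exceed `m`, the first position of the
word length pattern at which the counts differ is therefore a strict decrease.
-/

/-- The defining relation (including the zero word) of a regular `4^m 2^{n-p}` design
represented by subspaces `U t` (four-level factors) and vectors `w i` (two-level factors)
in `V = (ZMod 2)^k`: the set of pairs `(s, u)` with each `u t ∈ U t` and
`∑ i, s i • w i + ∑ t, u t = 0`. -/
def wordSet {k m n : ℕ} (U : Fin m → Submodule (ZMod 2) (Fin k → ZMod 2))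
    (w : Fin n → Fin k → ZMod 2) :
    Set ((Fin n → ZMod 2) × (Fin m → (Fin k → ZMod 2))) :=
  {su | (∀ t, su.2 t ∈ U t) ∧ (∑ i, su.1 i • w i) + (∑ t, su.2 t) = 0}

/-- The length of a word `(s, u)`: the number of indices `i` with `s i = 1` plus the
number of four-level factors `t` with `u t ≠ 0`. -/
def wordLength {k m n : ℕ} (su : (Fin n → ZMod 2) × (Fin m → (Fin k → ZMod 2))) : ℕ :=
  (Finset.univ.filter fun i => su.1 i = 1).card +
    (Finset.univ.filter fun t => su.2 t ≠ 0).card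

/-- The type of a word `(s, u)`: the number of four-level factors `t` with `u t ≠ 0`. -/
def wordType {k m n : ℕ} (su : (Fin n → ZMod 2) × (Fin m → (Fin k → ZMod 2))) : ℕ :=
  (Finset.univ.filter fun t => su.2 t ≠ 0).card

/-- `Acount U w ℓ t` is the number `A_{ℓ,t}` of defining words of length `ℓ` and type `t`. -/
noncomputable def Acount {k m n : ℕ} (U : Fin m → Submodule (ZMod 2) (Fin k → ZMod 2))
    (w : Fin n → Fin k → ZMod 2) (ℓ t : ℕ) : ℕ :=
  Nat.card {su : (Fin n → ZMod 2) × (Fin m → (Fin k → ZMod 2)) //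
    su ∈ wordSet U w ∧ su ≠ 0 ∧ wordLength su = ℓ ∧ wordType su = t}

/-- `wlpLexLt A B` says that the word length pattern of type `m` recorded by `A`
(as a function `(length, type) ↦ A_{ℓ,t}`) is lexicographically strictly smaller than
the one recorded by `B`, where positions are ordered by increasing length and,
within a length, by decreasing type: "less aberration of type m". -/
def wlpLexLt (A B : ℕ → ℕ → ℕ) : Prop :=
  ∃ ℓ t, A ℓ t < B ℓ t ∧
    ∀ ℓ' t', (ℓ' < ℓ ∨ (ℓ' = ℓ ∧ t < t')) → A ℓ' t' = B ℓ' t'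

open Finset

theorem Nat.card_lt_card_of_injective_of_notMem {α β : Type*} [Finite β] (f : α → β)
    (hf : Function.Injective f) {b : β} (hb : b ∉ Set.range f) : Nat.card α < Nat.card β := by
  have := Fintype.ofFinite β
  have := Fintype.ofInjective f hf
  simpa only [Nat.card_eq_fintype_card] using Fintype.card_lt_of_injective_of_notMem f hf hb

theorem wlpLexLt_of_le_of_lt {A B : ℕ → ℕ → ℕ} (m : ℕ) (hB : ∀ ℓ t, m < t → B ℓ t = 0)
    (hle : ∀ ℓ t, A ℓ t ≤ B ℓ t) (hlt : ∃ ℓ t, A ℓ t < B ℓ t) : wlpLexLt A B := by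
  classical
  let ℓ := Nat.find hlt
  obtain ⟨t₁, ht₁⟩ : ∃ t, A ℓ t < B ℓ t := Nat.find_spec hlt
  have ht₁m : t₁ ≤ m := by
    by_contra! h
    simp [hB ℓ t₁ h] at ht₁
  refine ⟨ℓ, Nat.findGreatest (fun t => A ℓ t < B ℓ t) m,
    Nat.findGreatest_spec (P := fun t => A ℓ t < B ℓ t) ht₁m ht₁, ?_⟩
  rintro ℓ' t' (hℓ' | ⟨rfl, ht'⟩)
  · have hnot : ¬ ∃ t, A ℓ' t < B ℓ' t := Nat.find_min hlt hℓ'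
    exact le_antisymm (hle ℓ' t') (not_lt.mp (not_exists.mp hnot t'))
  · refine le_antisymm (hle ℓ t') (not_lt.mp fun h => ?_)
    rcases le_or_gt t' m with hm | hm
    · exact Nat.findGreatest_is_greatest ht' hm h
    · simp [hB ℓ t' hm] at h

theorem Fin.sum_insertNth_zero_smul {R M : Type*} [Semiring R] [AddCommMonoid M] [Module R M]
    {n : ℕ} (j : Fin (n + 1)) (s : Fin n → R) (w : Fin (n + 1) → M) :
    ∑ i, Fin.insertNth (α := fun _ => R) j 0 s i • w i = ∑ i, s i • w (j.succAbove i) := by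
  simp [Fin.sum_univ_succAbove _ j]

theorem Fin.card_filter_insertNth {α : Type*} {n : ℕ} (p : α → Prop) [DecidablePred p]
    (j : Fin (n + 1)) {a : α} (ha : ¬ p a) (s : Fin n → α) :
    #{i | p (Fin.insertNth (α := fun _ => α) j a s i)} = #{i | p (s i)} := by
  rw [card_filter, card_filter, Fin.sum_univ_succAbove _ j]
  simp [ha]

abbrev Word (k m n : ℕ) := (Fin n → ZMod 2) × (Fin m → Fin k → ZMod 2)

section insertZero

variable {k m n : ℕ}

def insertZero (j : Fin (n + 1)) (su : Word k m n) : Word k m (n + 1) :=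
  (Fin.insertNth j 0 su.1, su.2)

theorem insertZero_injective (j : Fin (n + 1)) :
    Function.Injective (insertZero (k := k) (m := m) j) := by
  rintro ⟨s, u⟩ ⟨s', u'⟩ h
  simpa [insertZero] using h

theorem insertZero_ne_zero {j : Fin (n + 1)} {su : Word k m n} (h : su ≠ 0) :
    insertZero j su ≠ 0 := by
  contrapose! h
  simp only [insertZero, Prod.ext_iff, Prod.fst_zero, Prod.snd_zero, Fin.insertNth_eq_iff] at h
  exact Prod.ext (h.1.2.trans rfl) h.2

theorem insertZero_apply_fst_self (j : Fin (n + 1)) (su : Word k m n) :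
    (insertZero j su).1 j = 0 :=
  Fin.insertNth_apply_same (α := fun _ => ZMod 2) _ _ _

theorem insertZero_mem_wordSet {U : Fin m → Submodule (ZMod 2) (Fin k → ZMod 2)}
    {w : Fin (n + 1) → Fin k → ZMod 2} {j : Fin (n + 1)} {su : Word k m n}
    (hsu : su ∈ wordSet U (w ∘ j.succAbove)) : insertZero j su ∈ wordSet U w := by
  refine ⟨hsu.1, ?_⟩
  simpa [insertZero, Fin.sum_insertNth_zero_smul] using hsu.2

theorem wordLength_insertZero (j : Fin (n + 1)) (su : Word k m n) :
    wordLength (insertZero j su) = wordLength su :=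
  congrArg (· + wordType su) (Fin.card_filter_insertNth (· = 1) j zero_ne_one su.1)

theorem wordType_insertZero (j : Fin (n + 1)) (su : Word k m n) :
    wordType (insertZero j su) = wordType su :=
  rfl

end insertZero

section Acount

variable {k m n : ℕ} (U : Fin m → Submodule (ZMod 2) (Fin k → ZMod 2))

abbrev DefiningWords (w : Fin n → Fin k → ZMod 2) (ℓ t : ℕ) :=
  {su : Word k m n // su ∈ wordSet U w ∧ su ≠ 0 ∧ wordLength su = ℓ ∧ wordType su = t}

def DefiningWords.insertZero {w : Fin (n + 1) → Fin k → ZMod 2} (j : Fin (n + 1)) {ℓ t : ℕ}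
    (x : DefiningWords U (w ∘ j.succAbove) ℓ t) : DefiningWords U w ℓ t :=
  ⟨_root_.insertZero j x.1, insertZero_mem_wordSet x.2.1, insertZero_ne_zero x.2.2.1,
    (wordLength_insertZero j _).trans x.2.2.2.1, (wordType_insertZero j _).trans x.2.2.2.2⟩

theorem DefiningWords.insertZero_injective (w : Fin (n + 1) → Fin k → ZMod 2) (j : Fin (n + 1))
    (ℓ t : ℕ) : Function.Injective (DefiningWords.insertZero U (w := w) j (ℓ := ℓ) (t := t)) :=
  fun _ _ h => Subtype.ext (_root_.insertZero_injective j (congrArg Subtype.val h))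

theorem Acount_comp_succAbove_le (w : Fin (n + 1) → Fin k → ZMod 2) (j : Fin (n + 1))
    (ℓ t : ℕ) : Acount U (w ∘ j.succAbove) ℓ t ≤ Acount U w ℓ t :=
  Nat.card_le_card_of_injective _ (DefiningWords.insertZero_injective U w j ℓ t)

theorem Acount_comp_succAbove_lt {w : Fin (n + 1) → Fin k → ZMod 2} {j : Fin (n + 1)}
    {su : Word k m (n + 1)} (hsu : su ∈ wordSet U w) (hj : su.1 j ≠ 0) :
    Acount U (w ∘ j.succAbove) (wordLength su) (wordType su) <
      Acount U w (wordLength su) (wordType su) := by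
  have hsu0 : su ≠ 0 := by rintro rfl; exact hj rfl
  refine Nat.card_lt_card_of_injective_of_notMem _ (DefiningWords.insertZero_injective U w j _ _)
    (b := ⟨su, hsu, hsu0, rfl, rfl⟩) ?_
  rintro ⟨x, hx⟩
  have hx_j := congrArg (fun y : DefiningWords U w _ _ => y.1.1 j) hx
  exact hj (hx_j ▸ insertZero_apply_fst_self j x.1)

theorem Acount_eq_zero_of_lt (w : Fin n → Fin k → ZMod 2) (ℓ : ℕ) {t : ℕ} (ht : m < t) :
    Acount U w ℓ t = 0 := by
  have : IsEmpty (DefiningWords U w ℓ t) := ⟨fun x => by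
    have : wordType x.1 ≤ m := (card_filter_le _ _).trans (by simp)
    omega⟩
  exact Nat.card_of_isEmpty

end Acount

theorem deleteOneFactor_lessAberration_general {k m n : ℕ}
    (U : Fin m → Submodule (ZMod 2) (Fin k → ZMod 2))
    (w : Fin (n + 1) → Fin k → ZMod 2)
    (hres : ∀ su ∈ wordSet U w, su ≠ 0 → 3 ≤ wordLength su)
    (j : Fin (n + 1))
    (hword : ∃ su ∈ wordSet U w, su.1 j = 1) :
    (∀ ℓ t, 3 ≤ ℓ → Acount U (w ∘ j.succAbove) ℓ t ≤ Acount U w ℓ t) ∧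
      (∃ ℓ t, 3 ≤ ℓ ∧ Acount U (w ∘ j.succAbove) ℓ t < Acount U w ℓ t) ∧
      wlpLexLt (Acount U (w ∘ j.succAbove)) (Acount U w) := by
  obtain ⟨su, hsu, hj⟩ := hword
  have hj0 : su.1 j ≠ 0 := hj ▸ one_ne_zero
  have hsu0 : su ≠ 0 := by rintro rfl; exact hj0 rfl
  have hle := Acount_comp_succAbove_le U w j
  have hlt := Acount_comp_succAbove_lt U hsu hj0
  refine ⟨fun ℓ t _ => hle ℓ t, ⟨_, _, hres su hsu hsu0, hlt⟩, ?_⟩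
  exact wlpLexLt_of_le_of_lt m (fun ℓ _ ht => Acount_eq_zero_of_lt U w ℓ ht) hle ⟨_, _, hlt⟩

/-- If a resolution-≥III design `D` has a defining word with `s j = 1`, then the
delete-one-factor projection `D_(j)` satisfies `A_{ℓ,t}(D_(j)) ≤ A_{ℓ,t}(D)` for every
length `ℓ ≥ 3` and type `t`, with strict inequality for at least one pair `(ℓ, t)`;
consequently `D_(j)` has strictly less aberration of type `m` than `D`. -/
theorem deleteOneFactor_lessAberration {k m n : ℕ}
    (U : Fin m → Submodule (ZMod 2) (Fin k → ZMod 2))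
    (hU2 : ∀ t, Module.finrank (ZMod 2) (U t) = 2)
    (hUind : iSupIndep U)
    (w : Fin (n + 1) → Fin k → ZMod 2)
    (hres : ∀ su ∈ wordSet U w, su ≠ 0 → 3 ≤ wordLength su)
    (j : Fin (n + 1))
    (hword : ∃ su ∈ wordSet U w, su.1 j = 1) :
    (∀ ℓ t, 3 ≤ ℓ → Acount U (w ∘ j.succAbove) ℓ t ≤ Acount U w ℓ t) ∧
      (∃ ℓ t, 3 ≤ ℓ ∧ Acount U (w ∘ j.succAbove) ℓ t < Acount U w ℓ t) ∧
      wlpLexLt (Acount U (w ∘ j.succAbove)) (Acount U w) :=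
  deleteOneFactor_lessAberration_general U w hres j hword
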